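/- arXiv:1806.01215 — 6 statements merged into one kernel-verified Lean document; each statement's English description precedes it below -/
import Mathlib

section
/- For any u ∈ L¹(X, ν), the coarea formula holds: TV_m(u) = ∫_{−∞}^{+∞} P_m(E_t(u)) dt, where E_t(u) = {x ∈ X : u(x) > t}. -/
open MeasureTheory ProbabilityTheory
open scoped ENNReal

/-!
Write `π` for the joint law `dm_x(y) dν(x)` on `X × X`. Reversibility makes `π` swap-invariant,
so `∫ |u y - u x| dπ = 2 ∫ (u x - u y)⁺ dπ`. As `(u x - u y)⁺` is the length of
`{t | u y ≤ t < u x}`, Tonelli turns this into `∫ π {u y ≤ t < u x} dt`, and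
`π {u y ≤ t < u x} = π (E_t ×ˢ E_tᶜ) = P_m(E_t)`. Nothing makes `ν` σ-finite, so Tonelli is applied
to `π` restricted to a σ-finite set carrying the integrable function `(u x - u y)⁺`.
-/

/-- The joint measure `dm_x(y) dν(x)` on `X × X`. -/
noncomputable def jointMeasure {X : Type*} [MeasurableSpace X] (ν : Measure X)
    (m : X → Measure X) : Measure (X × X) :=
  ν.bind (fun x => (m x).map (fun y => (x, y)))

/-- Reversibility of `ν` for the random walk `m`. -/
def Reversible {X : Type*} [MeasurableSpace X] (ν : Measure X) (m : X → Measure X) : Prop :=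
  (jointMeasure ν m).map Prod.swap = jointMeasure ν m

section LevelSets

variable {α : Type*} [MeasurableSpace α] {μ : Measure α} {f g : α → ℝ}

lemma measurableSet_setOf_le_lt (hf : Measurable f) (hg : Measurable g) :
    MeasurableSet {q : α × ℝ | g q.1 ≤ q.2 ∧ q.2 < f q.1} :=
  (measurableSet_le (hg.comp measurable_fst) measurable_snd).inter
    (measurableSet_lt measurable_snd (hf.comp measurable_fst))

lemma prod_volume_setOf_le_lt [SFinite μ] (hf : Measurable f) (hg : Measurable g) :
    μ.prod volume {q : α × ℝ | g q.1 ≤ q.2 ∧ q.2 < f q.1}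
      = ∫⁻ p, ENNReal.ofReal (f p - g p) ∂μ := by
  rw [Measure.prod_apply (measurableSet_setOf_le_lt hf hg)]
  exact lintegral_congr fun p => Real.volume_Ico (a := g p) (b := f p)

lemma exists_sigmaFinite_restrict_superset_setOf_lt (hf : Measurable f) (hg : Measurable g)
    (hfin : ∫⁻ p, ENNReal.ofReal (f p - g p) ∂μ ≠ ∞) :
    ∃ s, {p | g p < f p} ⊆ s ∧ SigmaFinite (μ.restrict s) := by
  obtain ⟨s, -, hzero, hσ⟩ := (ENNReal.finStronglyMeasurable_of_measurable hfin
    (hf.sub hg).ennreal_ofReal).exists_set_sigmaFinite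
  refine ⟨s, fun p hp => by_contra fun hps => ?_, hσ⟩
  exact (sub_pos.2 hp).not_ge (ENNReal.ofReal_eq_zero.1 (hzero p hps))

lemma measurable_measure_setOf_le_lt (hf : Measurable f) (hg : Measurable g)
    (hfin : ∫⁻ p, ENNReal.ofReal (f p - g p) ∂μ ≠ ∞) :
    Measurable fun t => μ {p | g p ≤ t ∧ t < f p} := by
  obtain ⟨s, hs, hσ⟩ := exists_sigmaFinite_restrict_superset_setOf_lt hf hg hfin
  have hrestrict : ∀ t, μ {p | g p ≤ t ∧ t < f p} = μ.restrict s {p | g p ≤ t ∧ t < f p} :=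
    fun t => (Measure.restrict_eq_self _ fun p hp => hs (hp.1.trans_lt hp.2)).symm
  simp_rw [hrestrict]
  exact measurable_measure_prodMk_right (measurableSet_setOf_le_lt hf hg)

lemma lintegral_measure_setOf_le_lt (hf : Measurable f) (hg : Measurable g)
    (hfin : ∫⁻ p, ENNReal.ofReal (f p - g p) ∂μ ≠ ∞) :
    ∫⁻ t, μ {p | g p ≤ t ∧ t < f p} = ∫⁻ p, ENNReal.ofReal (f p - g p) ∂μ := by
  obtain ⟨s, hs, hσ⟩ := exists_sigmaFinite_restrict_superset_setOf_lt hf hg hfin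
  calc ∫⁻ t, μ {p | g p ≤ t ∧ t < f p}
      = ∫⁻ t, μ.restrict s {p | g p ≤ t ∧ t < f p} :=
        lintegral_congr fun t =>
          (Measure.restrict_eq_self _ fun p hp => hs (hp.1.trans_lt hp.2)).symm
    _ = (μ.restrict s).prod volume {q : α × ℝ | g q.1 ≤ q.2 ∧ q.2 < f q.1} :=
        (Measure.prod_apply_symm (measurableSet_setOf_le_lt hf hg)).symm
    _ = ∫⁻ p in s, ENNReal.ofReal (f p - g p) ∂μ := prod_volume_setOf_le_lt hf hg
    _ = ∫⁻ p, ENNReal.ofReal (f p - g p) ∂μ :=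
        setLIntegral_eq_of_support_subset fun p hp =>
          hs (sub_pos.1 (ENNReal.ofReal_pos.1 (pos_iff_ne_zero.2 hp)))

end LevelSets

lemma ProbabilityTheory.Kernel.measurable_map_prodMk_left {X : Type*} [MeasurableSpace X]
    (κ : Kernel X X) [IsSFiniteKernel κ] :
    Measurable fun x => (κ x).map (Prod.mk x) := by
  refine Measure.measurable_of_measurable_coe _ fun s hs => ?_
  simp_rw [Measure.map_apply measurable_prodMk_left hs]
  exact Kernel.measurable_kernel_prodMk_left hs

section JointMeasure

variable {X : Type*} [MeasurableSpace X] {ν : Measure X} {κ : Kernel X X}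

lemma jointMeasure_apply [IsSFiniteKernel κ] {s : Set (X × X)} (hs : MeasurableSet s) :
    jointMeasure ν κ s = ∫⁻ x, κ x (Prod.mk x ⁻¹' s) ∂ν := by
  rw [jointMeasure, Measure.bind_apply hs κ.measurable_map_prodMk_left.aemeasurable]
  exact lintegral_congr fun x => Measure.map_apply measurable_prodMk_left hs

lemma jointMeasure_prod [IsSFiniteKernel κ] {A B : Set X} (hA : MeasurableSet A)
    (hB : MeasurableSet B) :
    jointMeasure ν κ (A ×ˢ B) = ∫⁻ x in A, κ x B ∂ν := by
  classical
  rw [jointMeasure_apply (hA.prod hB), ← lintegral_indicator hA]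
  refine lintegral_congr fun x => ?_
  by_cases hx : x ∈ A <;> simp [hx]

lemma lintegral_jointMeasure [IsSFiniteKernel κ] {f : X × X → ℝ≥0∞} (hf : Measurable f) :
    ∫⁻ p, f p ∂jointMeasure ν κ = ∫⁻ x, ∫⁻ y, f (x, y) ∂κ x ∂ν := by
  rw [jointMeasure, Measure.lintegral_bind κ.measurable_map_prodMk_left.aemeasurable
    hf.aemeasurable]
  exact lintegral_congr fun x => lintegral_map hf measurable_prodMk_left

lemma integral_integral_eq_toReal_lintegral_jointMeasure [IsSFiniteKernel κ] {f : X × X → ℝ}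
    (hf : Measurable f) (hf0 : 0 ≤ f) (hfin : ∫⁻ p, ENNReal.ofReal (f p) ∂jointMeasure ν κ ≠ ∞) :
    ∫ x, ∫ y, f (x, y) ∂κ x ∂ν = (∫⁻ p, ENNReal.ofReal (f p) ∂jointMeasure ν κ).toReal := by
  have hinner : ∀ x, ∫ y, f (x, y) ∂κ x = (∫⁻ y, ENNReal.ofReal (f (x, y)) ∂κ x).toReal :=
    fun x => integral_eq_lintegral_of_nonneg_ae (ae_of_all _ fun y => hf0 _)
      (hf.comp measurable_prodMk_left).aestronglyMeasurable
  have hmeas : Measurable fun x => ∫⁻ y, ENNReal.ofReal (f (x, y)) ∂κ x :=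
    hf.ennreal_ofReal.lintegral_kernel_prod_right'
  rw [lintegral_jointMeasure hf.ennreal_ofReal] at hfin ⊢
  simp_rw [hinner]
  exact integral_toReal hmeas.aemeasurable (ae_lt_top hmeas hfin)

lemma setIntegral_toReal_eq_toReal_jointMeasure_prod [IsFiniteKernel κ] {A B : Set X}
    (hA : MeasurableSet A) (hB : MeasurableSet B) :
    ∫ x in A, (κ x B).toReal ∂ν = (jointMeasure ν κ (A ×ˢ B)).toReal := by
  rw [jointMeasure_prod hA hB]
  exact integral_toReal (κ.measurable_coe hB).aemeasurable (ae_of_all _ fun x => measure_lt_top _ _)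

lemma map_fst_jointMeasure [IsMarkovKernel κ] : (jointMeasure ν κ).map Prod.fst = ν := by
  ext s hs
  rw [Measure.map_apply measurable_fst hs, ← Set.prod_univ, jointMeasure_prod hs MeasurableSet.univ]
  simp

end JointMeasure

namespace Reversible

variable {X : Type*} [MeasurableSpace X] {ν : Measure X} {m : X → Measure X}

lemma lintegral_comp_swap (hrev : Reversible ν m) {f : X × X → ℝ≥0∞} (hf : Measurable f) :
    ∫⁻ p, f p.swap ∂jointMeasure ν m = ∫⁻ p, f p ∂jointMeasure ν m := by
  conv_rhs => rw [← hrev]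
  exact (lintegral_map hf measurable_swap).symm

lemma lintegral_ofReal_abs_sub (hrev : Reversible ν m) {u : X → ℝ} (hu : Measurable u) :
    ∫⁻ p, ENNReal.ofReal |u p.2 - u p.1| ∂jointMeasure ν m
      = 2 * ∫⁻ p, ENNReal.ofReal (u p.1 - u p.2) ∂jointMeasure ν m := by
  have hsub : Measurable fun p : X × X => ENNReal.ofReal (u p.1 - u p.2) :=
    ((hu.comp measurable_fst).sub (hu.comp measurable_snd)).ennreal_ofReal
  have habs : ∀ p : X × X, ENNReal.ofReal |u p.2 - u p.1|
      = ENNReal.ofReal (u p.1 - u p.2) + ENNReal.ofReal (u p.2 - u p.1) := by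
    intro p
    rcases le_total (u p.1) (u p.2) with h | h
    · rw [abs_of_nonneg (sub_nonneg.2 h), ENNReal.ofReal_of_nonpos (sub_nonpos.2 h), zero_add]
    · rw [abs_sub_comm, abs_of_nonneg (sub_nonneg.2 h),
        ENNReal.ofReal_of_nonpos (sub_nonpos.2 h), add_zero]
  rw [lintegral_congr habs, lintegral_add_left hsub, two_mul]
  congr 1
  exact hrev.lintegral_comp_swap hsub

lemma map_snd_jointMeasure (hrev : Reversible ν m) :
    (jointMeasure ν m).map Prod.snd = (jointMeasure ν m).map Prod.fst := by
  conv_lhs => rw [← hrev, Measure.map_map measurable_snd measurable_swap]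
  rfl

lemma integrable_sub {κ : Kernel X X} [IsMarkovKernel κ] (hrev : Reversible ν κ) {u : X → ℝ}
    (hu : Integrable u ν) : Integrable (fun p : X × X => u p.1 - u p.2) (jointMeasure ν κ) := by
  have hν : (jointMeasure ν κ).map Prod.fst = ν := map_fst_jointMeasure
  exact ((hν ▸ hu).comp_measurable measurable_fst).sub
    ((hrev.map_snd_jointMeasure ▸ hν ▸ hu).comp_measurable measurable_snd)

end Reversible

theorem coarea_formula_general {X : Type*} [MeasurableSpace X]
    (ν : Measure X) (m : X → Measure X)
    (hm : Measurable m) (hprob : ∀ x, IsProbabilityMeasure (m x))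
    (hrev : Reversible ν m)
    (u : X → ℝ) (hu : Measurable u) (hu1 : Integrable u ν) :
    (1/2) * ∫ x, (∫ y, |u y - u x| ∂(m x)) ∂ν
      = ∫ t : ℝ, (∫ x in {x | t < u x}, (m x ({y | t < u y}ᶜ)).toReal ∂ν) := by
  obtain ⟨κ, rfl⟩ : ∃ κ : Kernel X X, ⇑κ = m := ⟨⟨m, hm⟩, rfl⟩
  have : IsMarkovKernel κ := ⟨hprob⟩
  have hu₁ : Measurable fun p : X × X => u p.1 := hu.comp measurable_fst
  have hu₂ : Measurable fun p : X × X => u p.2 := hu.comp measurable_snd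
  have hD : ∫⁻ p, ENNReal.ofReal (u p.1 - u p.2) ∂jointMeasure ν κ ≠ ∞ :=
    (hrev.integrable_sub hu1).lintegral_lt_top.ne
  have hlevel : ∀ t : ℝ, {p : X × X | u p.2 ≤ t ∧ t < u p.1}
      = {x | t < u x} ×ˢ {y | t < u y}ᶜ := fun t => by ext; simp [and_comm]
  calc (1/2) * ∫ x, ∫ y, |u y - u x| ∂κ x ∂ν
      = (1/2) * (∫⁻ p, ENNReal.ofReal |u p.2 - u p.1| ∂jointMeasure ν κ).toReal := by
        rw [integral_integral_eq_toReal_lintegral_jointMeasure (f := fun p => |u p.2 - u p.1|)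
          (by fun_prop) (fun p => abs_nonneg _)
          (by rw [hrev.lintegral_ofReal_abs_sub hu]; finiteness)]
    _ = (∫⁻ p, ENNReal.ofReal (u p.1 - u p.2) ∂jointMeasure ν κ).toReal := by
        rw [hrev.lintegral_ofReal_abs_sub hu, ENNReal.toReal_mul, ENNReal.toReal_ofNat]; ring
    _ = (∫⁻ t, jointMeasure ν κ {p | u p.2 ≤ t ∧ t < u p.1}).toReal := by
        rw [lintegral_measure_setOf_le_lt hu₁ hu₂ hD]
    _ = ∫ t, (jointMeasure ν κ {p | u p.2 ≤ t ∧ t < u p.1}).toReal := by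
        have hmeas := measurable_measure_setOf_le_lt hu₁ hu₂ hD
        refine (integral_toReal hmeas.aemeasurable (ae_lt_top hmeas ?_)).symm
        rwa [lintegral_measure_setOf_le_lt hu₁ hu₂ hD]
    _ = ∫ t, ∫ x in {x | t < u x}, (κ x {y | t < u y}ᶜ).toReal ∂ν := by
        have hE : ∀ t, MeasurableSet {x | t < u x} := fun t => measurableSet_lt measurable_const hu
        simp_rw [hlevel, setIntegral_toReal_eq_toReal_jointMeasure_prod (hE _) (hE _).compl]

/-- Coarea formula: for `u ∈ L¹(X,ν)`,
`TV_m(u) = ∫_ℝ P_m({u > t}) dt`, where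
`TV_m(u) = (1/2)∫∫ |u(y)-u(x)| dm_x(y)dν(x)` and
`P_m(E) = ∫_E m_x(X∖E) dν(x)`. -/
theorem coarea_formula {X : Type*} [MeasurableSpace X]
    (ν : Measure X) (m : X → Measure X)
    (hm : Measurable m) (hprob : ∀ x, IsProbabilityMeasure (m x))
    (hinv : ν.bind m = ν) (hrev : Reversible ν m)
    (u : X → ℝ) (hu : Measurable u) (hu1 : Integrable u ν) :
    (1/2) * ∫ x, (∫ y, |u y - u x| ∂(m x)) ∂ν
      = ∫ t : ℝ, (∫ x in {x | t < u x}, (m x ({y | t < u y}ᶜ)).toReal ∂ν) :=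
  coarea_formula_general ν m hm hprob hrev u hu hu1
end

section
/- A metric random walk space [X,d,m] with reversible measure ν is m-connected if and only if for every pair of ν-measurable sets A, B of positive ν-measure with A ∪ B = X, the interaction L_m(A,B) = ∫_A m_x(B) dν(x) is strictly positive. -/
open MeasureTheory

/-- The `n`-step convolution of a random walk. -/
noncomputable def iterRW {X : Type*} [MeasurableSpace X] (m : X → Measure X) :
    ℕ → X → Measure X
  | 0 => fun x => Measure.dirac x
  | n + 1 => fun x => (iterRW m n x).bind m

/-- The set `N^m_D = {x : m_x^{*n}(D) = 0 for all n ≥ 1}`. -/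
def NSet {X : Type*} [MeasurableSpace X] (m : X → Measure X) (D : Set X) : Set X :=
  {x : X | ∀ n : ℕ, 1 ≤ n → iterRW m n x D = 0}

/-- `m`-connectedness: `ν(N^m_D) = 0` for every `D` with `0 < ν(D) < ∞`. -/
def MConnected {X : Type*} [MeasurableSpace X] (ν : Measure X) (m : X → Measure X) : Prop :=
  ∀ D : Set X, MeasurableSet D → 0 < ν D → ν D < ⊤ → ν (NSet m D) = 0

/-!
Reversibility makes `ν` invariant, `ν = ∫ m_x dν(x)`, since both are marginals of the symmetric
measure `dm_x(y) dν(x)`. If `L_m(A, B) = 0` with `A ∪ B = X`, then from almost every point of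
`A` the walk stays in `A` and never charges `B`; by invariance this persists for every number of
steps, so `A` lies in `N^m_D` for any `D ⊆ B` of finite positive measure. Conversely, `N^m_D` is
closed for the walk, so `L_m(N^m_D, (N^m_D)ᶜ) = 0`; and `(N^m_D)ᶜ` cannot be null, since
`ν(D) = ∫ m_x(D) dν(x)` and `m_x(D) = 0` on `N^m_D`.
-/

open ProbabilityTheory

section IterRW

variable {X : Type*} [MeasurableSpace X] (κ : Kernel X X)

lemma measurable_iterRW : ∀ n, Measurable (iterRW κ n)
  | 0 => Measure.measurable_dirac
  | n + 1 => (Measure.measurable_bind' κ.measurable).comp (measurable_iterRW n)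

lemma iterRW_one (x : X) : iterRW κ 1 x = κ x :=
  Measure.dirac_bind κ.measurable x

lemma iterRW_succ' : ∀ (n : ℕ) (x : X), iterRW κ (n + 1) x = (κ x).bind (iterRW κ n)
  | 0, x => by rw [iterRW_one]; exact Measure.bind_dirac.symm
  | n + 1, x => by
    change (iterRW κ (n + 1) x).bind κ = _
    rw [iterRW_succ' n x,
      Measure.bind_bind (measurable_iterRW κ n).aemeasurable κ.aemeasurable]
    rfl

lemma iterRW_succ_apply' {s : Set X} (hs : MeasurableSet s) (n : ℕ) (x : X) :
    iterRW κ (n + 1) x s = ∫⁻ y, iterRW κ n y s ∂κ x := by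
  rw [iterRW_succ', Measure.bind_apply hs (measurable_iterRW κ n).aemeasurable]

lemma measurable_iterRW_apply {s : Set X} (hs : MeasurableSet s) (n : ℕ) :
    Measurable fun x => iterRW κ n x s :=
  (Measure.measurable_coe hs).comp (measurable_iterRW κ n)

lemma measurableSet_NSet {D : Set X} (hD : MeasurableSet D) : MeasurableSet (NSet κ D) := by
  have hN : NSet κ D = ⋂ n, ⋂ (_ : 1 ≤ n), {x | iterRW κ n x D = 0} := by
    ext x; simp [NSet]
  rw [hN]
  exact .iInter fun n => .iInter fun _ =>
    measurable_iterRW_apply κ hD n (measurableSet_singleton 0)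

lemma measure_eq_zero_of_mem_NSet {D : Set X} {x : X} (hx : x ∈ NSet κ D) : κ x D = 0 :=
  iterRW_one κ x ▸ hx 1 le_rfl

lemma measure_compl_NSet_eq_zero {D : Set X} (hD : MeasurableSet D) {x : X}
    (hx : x ∈ NSet κ D) : κ x (NSet κ D)ᶜ = 0 := by
  have hstep : ∀ n, ∀ᵐ y ∂κ x, 1 ≤ n → iterRW κ n y D = 0 := fun n => by
    have h := hx (n + 1) (Nat.le_add_left 1 n)
    rw [iterRW_succ_apply' κ hD, lintegral_eq_zero_iff (measurable_iterRW_apply κ hD n)] at h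
    filter_upwards [h] with y hy _ using hy
  exact ae_iff.1 (ae_all_iff.2 hstep)

lemma ae_iterRW_eq_zero_of_ae_eq_zero {ν : Measure X} (hac : κ ∘ₘ ν ≪ ν) {A B : Set X}
    (hB : MeasurableSet B) (hAB : Aᶜ ⊆ B) (h : ∀ᵐ x ∂ν, x ∈ A → κ x B = 0) (n : ℕ) :
    ∀ᵐ x ∂ν, x ∈ A → iterRW κ (n + 1) x B = 0 := by
  induction n with
  | zero => simpa [iterRW_one] using h
  | succ n ih =>
    filter_upwards [h, Measure.ae_ae_of_ae_comp (hac.ae_le ih)] with x hxB hx hxA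
    have hstay : ∀ᵐ y ∂κ x, y ∈ A := measure_mono_null hAB (hxB hxA)
    rw [iterRW_succ_apply' κ hB]
    exact lintegral_eq_zero_of_ae_eq_zero
      (by filter_upwards [hstay, hx] with y hyA hy using hy hyA)

end IterRW

section Reversible

variable {X : Type*} [MeasurableSpace X] {ν : Measure X} [SFinite ν] (κ : Kernel X X)

lemma jointMeasure_eq_compProd [IsSFiniteKernel κ] : jointMeasure ν κ = ν ⊗ₘ κ := by
  rw [Measure.compProd_eq_comp_prod]
  refine congrArg ν.bind (funext fun x => ?_)
  rw [Kernel.prod_apply, Kernel.id_apply, Measure.dirac_prod]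

lemma Reversible.comp_eq_self [IsMarkovKernel κ] (h : Reversible ν κ) : κ ∘ₘ ν = ν := by
  rw [← Measure.snd_compProd, ← jointMeasure_eq_compProd, ← h, Measure.snd_map_swap,
    jointMeasure_eq_compProd, Measure.fst_compProd]

end Reversible

section Interaction

variable {X : Type*} [MeasurableSpace X] {ν : Measure X} (κ : Kernel X X)

lemma MConnected.lintegral_pos [SigmaFinite ν] (hconn : MConnected ν κ) (hac : κ ∘ₘ ν ≪ ν)
    {A B : Set X} (hA : MeasurableSet A) (hB : MeasurableSet B) (hApos : 0 < ν A)
    (hBpos : 0 < ν B) (hAB : A ∪ B = Set.univ) : 0 < ∫⁻ x in A, κ x B ∂ν := by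
  rw [pos_iff_ne_zero]
  intro h
  rw [setLIntegral_eq_zero_iff hA (κ.measurable_coe hB)] at h
  obtain ⟨D, hD, hDB, hDpos, hDlt⟩ := Measure.exists_subset_measure_lt_top hB hBpos
  have hAc : Aᶜ ⊆ B := fun x hx => (hAB ▸ Set.mem_univ x : x ∈ A ∪ B).resolve_left hx
  have hAN : ∀ᵐ x ∂ν, x ∈ A → x ∈ NSet κ D := by
    filter_upwards [ae_all_iff.2 (ae_iterRW_eq_zero_of_ae_eq_zero κ hac hB hAc h)]
      with x hx hxA n hn
    obtain ⟨k, rfl⟩ := Nat.exists_eq_add_of_le' hn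
    exact measure_mono_null hDB (hx k hxA)
  exact hApos.ne' (measure_mono_null_ae hAN (hconn D hD hDpos hDlt))

lemma mConnected_of_lintegral_pos (hinv : κ ∘ₘ ν = ν)
    (hpos : ∀ A B : Set X, MeasurableSet A → MeasurableSet B → 0 < ν A → 0 < ν B →
      A ∪ B = Set.univ → 0 < ∫⁻ x in A, κ x B ∂ν) :
    MConnected ν κ := by
  intro D hD hDpos _
  have hN := measurableSet_NSet κ hD
  by_contra hNpos
  have hNc : ν (NSet κ D)ᶜ = 0 := by
    by_contra hNc
    have hL := hpos _ _ hN hN.compl (pos_iff_ne_zero.2 hNpos) (pos_iff_ne_zero.2 hNc)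
      (Set.union_compl_self _)
    rw [setLIntegral_congr_fun hN (fun x hx => measure_compl_NSet_eq_zero κ hD hx),
      lintegral_zero] at hL
    exact lt_irrefl 0 hL
  refine hDpos.ne' ?_
  rw [← hinv, Measure.bind_apply hD κ.aemeasurable]
  exact lintegral_eq_zero_of_ae_eq_zero
    (by filter_upwards [ae_iff.2 hNc] with x hx using measure_eq_zero_of_mem_NSet κ hx)

end Interaction

/-- A metric random walk space with reversible measure `ν` is `m`-connected if and only if for
every pair of `ν`-measurable sets `A, B` of positive measure with `A ∪ B = X`, the interaction
`L_m(A,B) = ∫_A m_x(B) dν(x)` is strictly positive. -/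
theorem mConnected_iff_interaction_pos {X : Type*} [MeasurableSpace X]
    (ν : Measure X) [SigmaFinite ν] (m : X → Measure X)
    (hm : Measurable m) (hprob : ∀ x, IsProbabilityMeasure (m x))
    (hrev : Reversible ν m) :
    MConnected ν m ↔
      ∀ A B : Set X, MeasurableSet A → MeasurableSet B → 0 < ν A → 0 < ν B →
        A ∪ B = Set.univ → 0 < ∫⁻ x in A, m x B ∂ν := by
  let κ : Kernel X X := ⟨m, hm⟩
  have : IsMarkovKernel κ := ⟨hprob⟩
  have hinv : κ ∘ₘ ν = ν := hrev.comp_eq_self κ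
  exact ⟨fun hconn _ _ hA hB hApos hBpos hAB =>
      hconn.lintegral_pos κ (by rw [hinv]) hA hB hApos hBpos hAB,
    mConnected_of_lintegral_pos κ hinv⟩
end

section
/- Let ν be an invariant probability measure for m. Then ν is ergodic (i.e., every Borel set B with m_x(B) = 1 for all x ∈ B satisfies ν(B) ∈ {0,1}) if and only if the space is m-connected (i.e., ν(N^m_D) = 0 for every D with ν(D) > 0). -/
open MeasureTheory

/-!
`N^m_D` is itself invariant: a walk started in `N^m_D` that left it with positive probability
would reach `D` with positive probability. So ergodicity forces `ν(N^m_D) ∈ {0, 1}`, and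
`ν(N^m_D) = 1` is impossible when `ν(D) > 0`, since invariance of `ν` gives
`ν(D) = ∫ m_x(D) dν`. Conversely, a walk started in an invariant set `B` never reaches `Bᶜ`,
so `B ⊆ N^m_{Bᶜ}`, and `m`-connectedness forces `ν(B) = 0` as soon as `ν(Bᶜ) > 0`.
-/

namespace RandomWalk

variable {X : Type*} [MeasurableSpace X] {m : X → Measure X}

lemma measurable_iterRW (hm : Measurable m) : ∀ n, Measurable (iterRW m n)
  | 0 => Measure.measurable_dirac
  | n + 1 => (Measure.measurable_bind' hm).comp (measurable_iterRW hm n)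

lemma iterRW_one (hm : Measurable m) (x : X) : iterRW m 1 x = m x :=
  Measure.dirac_bind hm x

lemma iterRW_succ_eq_bind (hm : Measurable m) :
    ∀ n x, iterRW m (n + 1) x = (m x).bind (iterRW m n)
  | 0, x => by
    rw [iterRW_one hm, iterRW, Measure.bind_dirac]
  | n + 1, x => by
    change (iterRW m (n + 1) x).bind m = _
    rw [iterRW_succ_eq_bind hm n x,
      Measure.bind_bind (measurable_iterRW hm n).aemeasurable hm.aemeasurable]
    rfl

lemma measurableSet_NSet (hm : Measurable m) {D : Set X} (hD : MeasurableSet D) :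
    MeasurableSet (NSet m D) := by
  have hNSet : NSet m D = ⋂ n, ⋂ _ : 1 ≤ n, {x | iterRW m n x D = 0} := by
    ext x
    simp [NSet]
  rw [hNSet]
  exact .iInter fun n => .iInter fun _ =>
    Measure.measurable_measure.1 (measurable_iterRW hm n) D hD (measurableSet_singleton 0)

lemma ae_mem_NSet (hm : Measurable m) {D : Set X} (hD : MeasurableSet D) {x : X}
    (hx : x ∈ NSet m D) : ∀ᵐ y ∂(m x), y ∈ NSet m D := by
  refine ae_all_iff.2 fun n => Filter.eventually_imp_distrib_left.2 fun _ => ?_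
  have hint : ∫⁻ y, iterRW m n y D ∂(m x) = 0 := by
    rw [← Measure.bind_apply hD (measurable_iterRW hm n).aemeasurable,
      ← iterRW_succ_eq_bind hm]
    exact hx (n + 1) le_add_self
  exact (lintegral_eq_zero_iff (Measure.measurable_measure.1 (measurable_iterRW hm n) D hD)).1 hint

lemma measure_eq_zero_of_ae_mem_NSet (hm : Measurable m) {ν : Measure X} (hinv : ν.bind m = ν)
    {D : Set X} (hD : MeasurableSet D) (hN : ∀ᵐ x ∂ν, x ∈ NSet m D) : ν D = 0 := by
  rw [← hinv, Measure.bind_apply hD hm.aemeasurable,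
    lintegral_eq_zero_iff (Measure.measurable_measure.1 hm D hD)]
  filter_upwards [hN] with x hx
  simpa [iterRW_one hm] using hx 1 le_rfl

lemma iterRW_compl_eq_zero (hm : Measurable m) {B : Set X} (hB : MeasurableSet B)
    (hBinv : ∀ x ∈ B, m x Bᶜ = 0) : ∀ n, ∀ x ∈ B, iterRW m n x Bᶜ = 0
  | 0, x, hx => by simp [iterRW, Measure.dirac_apply' _ hB.compl, hx]
  | n + 1, x, hx => by
    rw [iterRW, Measure.bind_apply hB.compl hm.aemeasurable]
    refine lintegral_eq_zero_iff (Measure.measurable_measure.1 hm _ hB.compl) |>.2 ?_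
    have hae : ∀ᵐ y ∂(iterRW m n x), y ∈ B := iterRW_compl_eq_zero hm hB hBinv n x hx
    filter_upwards [hae] with y hy
    exact hBinv y hy

lemma subset_NSet_compl (hm : Measurable m) {B : Set X} (hB : MeasurableSet B)
    (hBinv : ∀ x ∈ B, m x Bᶜ = 0) : B ⊆ NSet m Bᶜ :=
  fun x hx n _ => iterRW_compl_eq_zero hm hB hBinv n x hx

end RandomWalk

open RandomWalk in
/-- Let `ν` be an invariant probability measure for `m`. Then `ν` is ergodic (every Borel set
`B` with `m_x(B) = 1` for all `x ∈ B` satisfies `ν(B) ∈ {0,1}`) if and only if the space is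
`m`-connected (`ν(N^m_D) = 0` for every measurable `D` with `ν(D) > 0`). -/
theorem ergodic_iff_mConnected {X : Type*} [MeasurableSpace X]
    (ν : Measure X) [IsProbabilityMeasure ν] (m : X → Measure X)
    (hm : Measurable m) (hprob : ∀ x, IsProbabilityMeasure (m x))
    (hinv : ν.bind m = ν) :
    (∀ B : Set X, MeasurableSet B → (∀ x ∈ B, m x B = 1) → ν B = 0 ∨ ν B = 1) ↔
      (∀ D : Set X, MeasurableSet D → 0 < ν D → ν (NSet m D) = 0) := by
  constructor
  · intro herg D hD hDpos
    have hN := measurableSet_NSet hm hD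
    refine (herg _ hN fun x hx => ?_).resolve_right fun hfull => hDpos.ne' ?_
    · exact (prob_compl_eq_zero_iff hN).1 (ae_mem_NSet hm hD hx)
    · exact measure_eq_zero_of_ae_mem_NSet hm hinv hD ((prob_compl_eq_zero_iff hN).2 hfull)
  · intro hconn B hB hBinv
    refine or_iff_not_imp_right.2 fun hB_ne_one => ?_
    have hBc : 0 < ν Bᶜ := pos_iff_ne_zero.2 (mt (prob_compl_eq_zero_iff hB).1 hB_ne_one)
    have hBinv' : ∀ x ∈ B, m x Bᶜ = 0 := fun x hx =>
      (prob_compl_eq_zero_iff hB).2 (hBinv x hx)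
    exact measure_mono_null (subset_NSet_compl hm hB hBinv') (hconn _ hB.compl hBc)
end

section
/- Let ν be a finite invariant and reversible measure for m. Then Δ_m is ergodic (Δ_m u = 0 implies u constant ν-a.e.) if and only if P_m(D) > 0 for every ν-measurable set D with 0 < ν(D) < ν(X). -/
open MeasureTheory

/-!
If `P_m(D) = 0`, invariance gives `P_m(Dᶜ) = P_m(D) = 0` as well, so a step of the walk almost
never crosses the boundary of `D` and `χ_D` is harmonic; ergodicity then makes `D` null or conull.
Conversely, for a harmonic `u ∈ L²(ν)` the Dirichlet energy vanishes:
`∫∫ (u y - u x)² dm_x(y) dν(x) = ∫ u² + ∫ u² - 2 ∫ u(x) (∫ u dm_x) dν(x) = 0`, the two squares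
being computed by invariance. Hence `u x = u y` for almost every step `(x, y)`, every preimage
`u⁻¹(U)` of a Borel set has zero perimeter and is null or conull, and since the Borel sets of `ℝ`
are countably separating, `u` is a.e. constant.
-/

open ProbabilityTheory Filter Set
open scoped ENNReal

lemma MeasureTheory.MeasurePreserving.integral_comp_of_aestronglyMeasurable
    {α β E : Type*} [MeasurableSpace α] [MeasurableSpace β] [NormedAddCommGroup E]
    [NormedSpace ℝ E] {μ : Measure α} {ν : Measure β} {f : α → β} (hf : MeasurePreserving f μ ν)
    {g : β → E} (hg : AEStronglyMeasurable g ν) :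
    ∫ x, g (f x) ∂μ = ∫ y, g y ∂ν := by
  rw [← integral_map hf.measurable.aemeasurable (hf.map_eq ▸ hg), hf.map_eq]

lemma MeasureTheory.not_eventuallyConst_ae_iff {X : Type*} [MeasurableSpace X] {ν : Measure X}
    [IsFiniteMeasure ν] {D : Set X} (hD : MeasurableSet D) :
    ¬EventuallyConst D (ae ν) ↔ 0 < ν D ∧ ν D < ν univ := by
  rw [eventuallyConst_set', ae_eq_empty, ae_eq_univ_iff_measure_eq hD.nullMeasurableSet,
    pos_iff_ne_zero, lt_iff_le_and_ne, and_iff_right (measure_mono (subset_univ D)), not_or]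

namespace ProbabilityTheory.Kernel

variable {X : Type*} [MeasurableSpace X] {ν : Measure X} {κ : Kernel X X} {D : Set X}
  {u : X → ℝ}

noncomputable def perimeter (κ : Kernel X X) (ν : Measure X) (D : Set X) : ℝ≥0∞ :=
  ∫⁻ x in D, κ x Dᶜ ∂ν

/-- `Δ_κ u = 0` `ν`-a.e. -/
def IsHarmonic (κ : Kernel X X) (ν : Measure X) (u : X → ℝ) : Prop :=
  ∀ᵐ x ∂ν, ∫ y, u y ∂κ x = u x

def IsErgodic (κ : Kernel X X) (ν : Measure X) : Prop :=
  ∀ u : X → ℝ, MemLp u 2 ν → κ.IsHarmonic ν u → ∃ c : ℝ, u =ᵐ[ν] fun _ => c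

lemma perimeter_eq_compProd_prod_compl [SFinite ν] [IsSFiniteKernel κ] (hD : MeasurableSet D) :
    κ.perimeter ν D = (ν ⊗ₘ κ) (D ×ˢ Dᶜ) :=
  (Measure.compProd_apply_prod hD hD.compl).symm

lemma perimeter_eq_zero_of_ae_mem_iff [SFinite ν] [IsSFiniteKernel κ] (hD : MeasurableSet D)
    (h : ∀ᵐ p ∂(ν ⊗ₘ κ), p.1 ∈ D ↔ p.2 ∈ D) : κ.perimeter ν D = 0 := by
  rw [perimeter_eq_compProd_prod_compl hD]
  refine measure_mono_null (fun p hp => ?_) (ae_iff.mp h)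
  exact fun hiff => hp.2 (hiff.mp hp.1)

lemma measurePreserving_fst_compProd [SFinite ν] [IsMarkovKernel κ] :
    MeasurePreserving Prod.fst (ν ⊗ₘ κ) ν :=
  ⟨measurable_fst, Measure.fst_compProd ν κ⟩

lemma Invariant.measurePreserving_snd [SFinite ν] [IsSFiniteKernel κ] (hκ : Invariant κ ν) :
    MeasurePreserving Prod.snd (ν ⊗ₘ κ) ν :=
  ⟨measurable_snd, by rw [← Measure.snd, Measure.snd_compProd]; exact hκ⟩

lemma Invariant.perimeter_compl [IsFiniteMeasure ν] [IsMarkovKernel κ] (hκ : Invariant κ ν)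
    (hD : MeasurableSet D) : κ.perimeter ν Dᶜ = κ.perimeter ν D := by
  have hκD : Measurable fun x => κ x D := κ.measurable_coe hD
  have hinv : ν D = ∫⁻ x in D, κ x D ∂ν + ∫⁻ x in Dᶜ, κ x D ∂ν := by
    conv_lhs => rw [← hκ.def, Measure.bind_apply hD κ.aemeasurable]
    exact (lintegral_add_compl _ hD).symm
  have hstay : ν D = ∫⁻ x in D, κ x D ∂ν + κ.perimeter ν D := by
    rw [perimeter, ← lintegral_add_left hκD]
    simp_rw [measure_add_measure_compl hD, measure_univ, setLIntegral_one]
  have hfin : ∫⁻ x in D, κ x D ∂ν ≠ ∞ := by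
    refine ne_top_of_le_ne_top (measure_ne_top ν D) ?_
    calc ∫⁻ x in D, κ x D ∂ν ≤ ∫⁻ _ in D, 1 ∂ν := lintegral_mono fun _ => prob_le_one
      _ = ν D := setLIntegral_one D
  rw [perimeter, compl_compl]
  exact (ENNReal.add_right_inj hfin).mp (hinv.symm.trans hstay)

lemma Invariant.isHarmonic_indicator [IsFiniteMeasure ν] [IsMarkovKernel κ]
    (hκ : Invariant κ ν) (hD : MeasurableSet D) (hP : κ.perimeter ν D = 0) :
    κ.IsHarmonic ν (D.indicator 1) := by
  have hin : ∀ᵐ x ∂ν, x ∈ D → κ x Dᶜ = 0 :=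
    (setLIntegral_eq_zero_iff hD (κ.measurable_coe hD.compl)).mp hP
  have hout : ∀ᵐ x ∂ν, x ∈ Dᶜ → κ x D = 0 := by
    rw [← hκ.perimeter_compl hD, perimeter, compl_compl] at hP
    exact (setLIntegral_eq_zero_iff hD.compl (κ.measurable_coe hD)).mp hP
  filter_upwards [hin, hout] with x hxin hxout
  rw [integral_indicator_one hD]
  by_cases hx : x ∈ D
  · simp [Measure.real, (prob_compl_eq_zero_iff hD).mp (hxin hx), hx]
  · simp [Measure.real, hxout hx, hx]

lemma IsErgodic.eventuallyConst_of_perimeter_eq_zero [IsFiniteMeasure ν] [IsMarkovKernel κ]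
    (herg : κ.IsErgodic ν) (hκ : Invariant κ ν) (hD : MeasurableSet D)
    (hP : κ.perimeter ν D = 0) : EventuallyConst D (ae ν) := by
  obtain ⟨c, hc⟩ := herg _ (memLp_indicator_const 2 hD 1 (.inr (measure_ne_top ν D)))
    (hκ.isHarmonic_indicator hD hP)
  exact .of_indicator_const ((EventuallyConst.const c).congr hc.symm) one_ne_zero

lemma IsHarmonic.integral_mul_fst_snd [SFinite ν] [IsMarkovKernel κ] (hκ : Invariant κ ν)
    (hu : MemLp u 2 ν) (hharm : κ.IsHarmonic ν u) :
    ∫ p, u p.1 * u p.2 ∂(ν ⊗ₘ κ) = ∫ x, u x ^ 2 ∂ν := by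
  have hint : Integrable (fun p : X × X => u p.1 * u p.2) (ν ⊗ₘ κ) :=
    (hu.comp_measurePreserving measurePreserving_fst_compProd).integrable_mul
      (hu.comp_measurePreserving hκ.measurePreserving_snd)
  rw [Measure.integral_compProd hint]
  refine integral_congr_ae ?_
  filter_upwards [hharm] with x hx
  rw [integral_const_mul, hx, sq]

lemma IsHarmonic.ae_fst_eq_snd [SFinite ν] [IsMarkovKernel κ] (hκ : Invariant κ ν)
    (hu : MemLp u 2 ν) (hharm : κ.IsHarmonic ν u) :
    ∀ᵐ p ∂(ν ⊗ₘ κ), u p.1 = u p.2 := by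
  have hfst := measurePreserving_fst_compProd (ν := ν) (κ := κ)
  have hsnd := hκ.measurePreserving_snd
  have hu₁ : MemLp (fun p : X × X => u p.1) 2 (ν ⊗ₘ κ) := hu.comp_measurePreserving hfst
  have hu₂ : MemLp (fun p : X × X => u p.2) 2 (ν ⊗ₘ κ) := hu.comp_measurePreserving hsnd
  have hI₁ : Integrable (fun p : X × X => u p.1 ^ 2) (ν ⊗ₘ κ) := hu₁.integrable_sq
  have hI₂ : Integrable (fun p : X × X => u p.2 ^ 2) (ν ⊗ₘ κ) := hu₂.integrable_sq
  have hI₂₁ : Integrable (fun p : X × X => u p.2 ^ 2 + u p.1 ^ 2) (ν ⊗ₘ κ) := hI₂.add hI₁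
  have hI₁₂ : Integrable (fun p : X × X => 2 * (u p.1 * u p.2)) (ν ⊗ₘ κ) :=
    (hu₁.integrable_mul hu₂).const_mul 2
  have henergy : ∫ p, (u p.2 - u p.1) ^ 2 ∂(ν ⊗ₘ κ) = 0 := calc
    _ = ∫ p, u p.2 ^ 2 + u p.1 ^ 2 - 2 * (u p.1 * u p.2) ∂(ν ⊗ₘ κ) := by
      congr with p; ring
    _ = 0 := by
      rw [integral_sub hI₂₁ hI₁₂, integral_add hI₂ hI₁, integral_const_mul,
        hfst.integral_comp_of_aestronglyMeasurable (g := fun x => u x ^ 2) hu.integrable_sq.1,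
        hsnd.integral_comp_of_aestronglyMeasurable (g := fun x => u x ^ 2) hu.integrable_sq.1,
        hharm.integral_mul_fst_snd hκ hu]
      ring
  have hzero := (integral_eq_zero_iff_of_nonneg (fun p => sq_nonneg _)
    (hu₂.sub hu₁).integrable_sq).mp henergy
  filter_upwards [hzero] with p hp
  exact (sub_eq_zero.mp (pow_eq_zero_iff two_ne_zero |>.mp hp)).symm

lemma exists_ae_eq_const_of_ae_fst_eq_snd [SFinite ν] [IsMarkovKernel κ] (hκ : Invariant κ ν)
    (hper : ∀ D, MeasurableSet D → κ.perimeter ν D = 0 → EventuallyConst D (ae ν))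
    (hu : AEMeasurable u ν) (h : ∀ᵐ p ∂(ν ⊗ₘ κ), u p.1 = u p.2) :
    ∃ c : ℝ, u =ᵐ[ν] fun _ => c := by
  have hw : ∀ᵐ p ∂(ν ⊗ₘ κ), hu.mk u p.1 = hu.mk u p.2 := by
    filter_upwards [h,
      measurePreserving_fst_compProd.quasiMeasurePreserving.ae_eq_comp hu.ae_eq_mk,
      hκ.measurePreserving_snd.quasiMeasurePreserving.ae_eq_comp hu.ae_eq_mk] with p hp h₁ h₂
    simp only [Function.comp_apply] at h₁ h₂
    rw [← h₁, ← h₂, hp]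
  obtain ⟨c, hc⟩ := exists_eventuallyEq_const_of_forall_separating (l := ae ν) (f := hu.mk u)
    MeasurableSet fun U hU =>
      eventuallyConst_set.mp <| hper (hu.mk u ⁻¹' U) (hu.measurable_mk hU) <|
        perimeter_eq_zero_of_ae_mem_iff (hu.measurable_mk hU) <|
          hw.mono fun p hp => by simp only [mem_preimage, hp]
  exact ⟨c, hu.ae_eq_mk.trans hc⟩

lemma Invariant.isErgodic_iff [IsFiniteMeasure ν] [IsMarkovKernel κ] (hκ : Invariant κ ν) :
    κ.IsErgodic ν ↔
      ∀ D, MeasurableSet D → κ.perimeter ν D = 0 → EventuallyConst D (ae ν) :=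
  ⟨fun herg _ hD hP => herg.eventuallyConst_of_perimeter_eq_zero hκ hD hP,
    fun hper _ hu hharm =>
      exists_ae_eq_const_of_ae_fst_eq_snd hκ hper hu.1.aemeasurable (hharm.ae_fst_eq_snd hκ hu)⟩

end ProbabilityTheory.Kernel

theorem laplacian_ergodic_iff_perimeter_pos_general {X : Type*} [MeasurableSpace X]
    (ν : Measure X) [IsFiniteMeasure ν] (m : X → Measure X)
    (hm : Measurable m) (hprob : ∀ x, IsProbabilityMeasure (m x))
    (hinv : ν.bind m = ν) :
    (∀ u : X → ℝ, MemLp u 2 ν → (∀ᵐ x ∂ν, (∫ y, u y ∂(m x)) = u x) →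
        ∃ c : ℝ, u =ᵐ[ν] fun _ => c) ↔
      (∀ D : Set X, MeasurableSet D → 0 < ν D → ν D < ν Set.univ →
        0 < ∫⁻ x in D, m x Dᶜ ∂ν) := by
  let κ : Kernel X X := ⟨m, hm⟩
  have : IsMarkovKernel κ := ⟨hprob⟩
  refine (Kernel.Invariant.isErgodic_iff (κ := κ) hinv).trans <| forall₂_congr fun D hD => ?_
  rw [← not_imp_not, not_eventuallyConst_ae_iff hD, and_imp]
  simp only [← pos_iff_ne_zero]
  rfl

/-- Let `ν` be a finite invariant and reversible measure for `m`. Then `Δ_m` is ergodic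
(`Δ_m u = 0` `ν`-a.e. implies `u` constant `ν`-a.e., for `u ∈ L²(X,ν)`) if and only if
`P_m(D) > 0` for every `ν`-measurable set `D` with `0 < ν(D) < ν(X)`. -/
theorem laplacian_ergodic_iff_perimeter_pos {X : Type*} [MeasurableSpace X]
    (ν : Measure X) [IsFiniteMeasure ν] (m : X → Measure X)
    (hm : Measurable m) (hprob : ∀ x, IsProbabilityMeasure (m x))
    (hinv : ν.bind m = ν) (hrev : Reversible ν m) :
    (∀ u : X → ℝ, MemLp u 2 ν → (∀ᵐ x ∂ν, (∫ y, u y ∂(m x)) = u x) →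
        ∃ c : ℝ, u =ᵐ[ν] fun _ => c) ↔
      (∀ D : Set X, MeasurableSet D → 0 < ν D → ν D < ν Set.univ →
        0 < ∫⁻ x in D, m x Dᶜ ∂ν) :=
  laplacian_ergodic_iff_perimeter_pos_general ν m hm hprob hinv
end

section
/- For a ν-measurable set D with ν(X) < ∞, the following are equivalent: (i) Δ_m χ_D = 0 ν-a.e.; (ii) m_x(D) = χ_D(x) for ν-a.e. x; (iii) P_m(D) = 0; (iv) ∫_D H^m_{∂D}(x) dν(x) = −ν(D). -/
open MeasureTheory ENNReal

/-! Reversibility of `ν` makes the flux `∫_D m_x(Dᶜ) dν` out of `D` equal to the flux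
`∫_{Dᶜ} m_x(D) dν` into `D`, and `P_m(D)` is the first of them. So `P_m(D) = 0` says at once that
`m_x(Dᶜ) = 0` a.e. on `D` and `m_x(D) = 0` a.e. off `D`, i.e. `m_x(D) = χ_D(x)` a.e. Since
`m_x(D) = 1 - m_x(Dᶜ)`, `∫_D H^m_{∂D} dν = 2 P_m(D) - ν(D)`. -/

open ProbabilityTheory

namespace ProbabilityTheory.Kernel

variable {X : Type*} [MeasurableSpace X] {ν : Measure X} (κ : Kernel X X)

theorem measurable_map_prodMk [IsSFiniteKernel κ] :
    Measurable fun x => (κ x).map (Prod.mk x) := by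
  refine Measure.measurable_of_measurable_coe _ fun s hs => ?_
  simp_rw [Measure.map_apply measurable_prodMk_left hs]
  exact measurable_kernel_prodMk_left hs

theorem jointMeasure_apply_prod [IsSFiniteKernel κ] {s t : Set X} (hs : MeasurableSet s)
    (ht : MeasurableSet t) : jointMeasure ν κ (s ×ˢ t) = ∫⁻ x in s, κ x t ∂ν := by
  classical
  rw [jointMeasure, Measure.bind_apply (hs.prod ht) (measurable_map_prodMk κ).aemeasurable,
    ← lintegral_indicator hs]
  congr 1 with x
  rw [Measure.map_apply measurable_prodMk_left (hs.prod ht), Set.mk_preimage_prod_right_eq_if]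
  by_cases hx : x ∈ s <;> simp [hx]

theorem setLIntegral_comm_of_reversible [IsSFiniteKernel κ] (hrev : Reversible ν κ)
    {s t : Set X} (hs : MeasurableSet s) (ht : MeasurableSet t) :
    ∫⁻ x in s, κ x t ∂ν = ∫⁻ x in t, κ x s ∂ν := by
  rw [← jointMeasure_apply_prod κ hs ht, ← jointMeasure_apply_prod κ ht hs,
    ← Set.preimage_swap_prod t s, ← Measure.map_apply measurable_swap (ht.prod hs), hrev]

variable [IsMarkovKernel κ] {D : Set X}

theorem ae_eq_indicator_iff (hD : MeasurableSet D) :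
    (∀ᵐ x ∂ν, κ x D = D.indicator (fun _ => 1) x) ↔
      (∀ᵐ x ∂ν.restrict D, κ x Dᶜ = 0) ∧ ∀ᵐ x ∂ν.restrict Dᶜ, κ x D = 0 := by
  conv_lhs => rw [← Measure.restrict_add_restrict_compl (μ := ν) hD, ae_add_measure_iff]
  refine and_congr (Filter.eventually_congr ?_) (Filter.eventually_congr ?_)
  · filter_upwards [ae_restrict_mem hD] with x hx
    rw [Set.indicator_of_mem hx, prob_compl_eq_zero_iff hD]
  · filter_upwards [ae_restrict_mem hD.compl] with x hx
    rw [Set.indicator_of_notMem hx, eq_comm]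

theorem setLIntegral_compl_le (D : Set X) : ∫⁻ x in D, κ x Dᶜ ∂ν ≤ ν D :=
  calc ∫⁻ x in D, κ x Dᶜ ∂ν ≤ ∫⁻ _ in D, 1 ∂ν := lintegral_mono fun _ => prob_le_one
    _ = ν D := setLIntegral_one D

theorem setIntegral_one_sub_two_mul [IsFiniteMeasure ν] (hD : MeasurableSet D) :
    ∫ x in D, (1 - 2 * (κ x D).toReal) ∂ν =
      2 * (∫⁻ x in D, κ x Dᶜ ∂ν).toReal - (ν D).toReal := by
  have hmeas : Measurable fun x => κ x Dᶜ := κ.measurable_coe hD.compl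
  have hint : Integrable (fun x => (κ x Dᶜ).toReal) (ν.restrict D) :=
    (integrable_const (1 : ℝ)).mono' hmeas.ennreal_toReal.aestronglyMeasurable
      (.of_forall fun _ => by simpa using toReal_mono one_ne_top prob_le_one)
  calc ∫ x in D, (1 - 2 * (κ x D).toReal) ∂ν = ∫ x in D, (2 * (κ x Dᶜ).toReal - 1) ∂ν := by
        congr 1 with x
        rw [prob_compl_eq_one_sub hD, ENNReal.toReal_sub_of_le prob_le_one one_ne_top, toReal_one]
        ring
    _ = 2 * (∫⁻ x in D, κ x Dᶜ ∂ν).toReal - (ν D).toReal := by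
        rw [integral_sub (hint.const_mul 2) (integrable_const 1), integral_const_mul,
          integral_toReal hmeas.aemeasurable (.of_forall fun _ => measure_lt_top _ _)]
        simp [Measure.real]

theorem ae_eq_indicator_iff_of_reversible (hrev : Reversible ν κ) (hD : MeasurableSet D) :
    (∀ᵐ x ∂ν, κ x D = D.indicator (fun _ => 1) x) ↔ ∫⁻ x in D, κ x Dᶜ ∂ν = 0 := by
  have h_on : ∫⁻ x in D, κ x Dᶜ ∂ν = 0 ↔ ∀ᵐ x ∂ν.restrict D, κ x Dᶜ = 0 :=
    lintegral_eq_zero_iff (κ.measurable_coe hD.compl)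
  have h_off : ∫⁻ x in D, κ x Dᶜ ∂ν = 0 ↔ ∀ᵐ x ∂ν.restrict Dᶜ, κ x D = 0 := by
    rw [κ.setLIntegral_comm_of_reversible hrev hD hD.compl]
    exact lintegral_eq_zero_iff (κ.measurable_coe hD)
  rw [κ.ae_eq_indicator_iff hD, ← h_on, ← h_off, and_self]

end ProbabilityTheory.Kernel

theorem ENNReal.toReal_sub_indicator_eq_zero_iff {X : Type*} {D : Set X} {x : X} {a : ℝ≥0∞}
    (ha : a ≠ ⊤) :
    a.toReal - D.indicator (fun _ => (1 : ℝ)) x = 0 ↔ a = D.indicator (fun _ => 1) x := by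
  by_cases hx : x ∈ D <;> simp [hx, sub_eq_zero, toReal_eq_zero_iff, toReal_eq_one_iff, ha]

theorem laplacian_char_zero_tfae_general {X : Type*} [MeasurableSpace X]
    (ν : Measure X) [IsFiniteMeasure ν] (m : X → Measure X)
    (hm : Measurable m) (hprob : ∀ x, IsProbabilityMeasure (m x))
    (hrev : Reversible ν m)
    (D : Set X) (hD : MeasurableSet D) :
    ((∀ᵐ x ∂ν, (m x D).toReal - D.indicator (fun _ => (1:ℝ)) x = 0) ↔
      (∀ᵐ x ∂ν, m x D = D.indicator (fun _ => (1:ℝ≥0∞)) x)) ∧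
    ((∀ᵐ x ∂ν, m x D = D.indicator (fun _ => (1:ℝ≥0∞)) x) ↔
      (∫⁻ x in D, m x Dᶜ ∂ν) = 0) ∧
    ((∫⁻ x in D, m x Dᶜ ∂ν) = 0 ↔
      (∫ x in D, (1 - 2 * (m x D).toReal) ∂ν) = -(ν D).toReal) := by
  obtain ⟨κ, rfl⟩ : ∃ κ : Kernel X X, ⇑κ = m := ⟨⟨m, hm⟩, rfl⟩
  have : IsMarkovKernel κ := ⟨hprob⟩
  have hL : ∫⁻ x in D, κ x Dᶜ ∂ν ≠ ⊤ :=
    ((κ.setLIntegral_compl_le D).trans_lt (measure_lt_top ν D)).ne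
  refine ⟨Filter.eventually_congr (.of_forall fun x =>
    toReal_sub_indicator_eq_zero_iff (measure_ne_top _ _)),
    κ.ae_eq_indicator_iff_of_reversible hrev hD, ?_⟩
  rw [κ.setIntegral_one_sub_two_mul hD, sub_eq_neg_self, mul_eq_zero, toReal_eq_zero_iff]
  simp [hL]

/-- For a `ν`-measurable set `D` (with `ν` finite, invariant and reversible), the following are
equivalent: (i) `Δ_m χ_D = 0` `ν`-a.e., i.e. `(m x D).toReal - χ_D(x) = 0` a.e.;
(ii) `m_x(D) = χ_D(x)` for `ν`-a.e. `x`; (iii) `P_m(D) = 0`;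
(iv) `∫_D H^m_{∂D} dν = -ν(D)` where `H^m_{∂D}(x) = 1 - 2 m_x(D)`. -/
theorem laplacian_char_zero_tfae {X : Type*} [MeasurableSpace X]
    (ν : Measure X) [IsFiniteMeasure ν] (m : X → Measure X)
    (hm : Measurable m) (hprob : ∀ x, IsProbabilityMeasure (m x))
    (hinv : ν.bind m = ν) (hrev : Reversible ν m)
    (D : Set X) (hD : MeasurableSet D) :
    ((∀ᵐ x ∂ν, (m x D).toReal - D.indicator (fun _ => (1:ℝ)) x = 0) ↔
      (∀ᵐ x ∂ν, m x D = D.indicator (fun _ => (1:ℝ≥0∞)) x)) ∧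
    ((∀ᵐ x ∂ν, m x D = D.indicator (fun _ => (1:ℝ≥0∞)) x) ↔
      (∫⁻ x in D, m x Dᶜ ∂ν) = 0) ∧
    ((∫⁻ x in D, m x Dᶜ ∂ν) = 0 ↔
      (∫ x in D, (1 - 2 * (m x D).toReal) ∂ν) = -(ν D).toReal) :=
  laplacian_char_zero_tfae_general ν m hm hprob hrev D hD
end

section
/- Let ν be an invariant and reversible probability measure for m with Ollivier-Ricci curvature κ_m. Then for every Lipschitz f ∈ L²(X,ν) with ‖f‖_Lip ≤ 1, the heat semigroup satisfies ‖e^{tΔ_m} f‖_Lip ≤ e^{−t κ_m} for all t ≥ 0. -/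
open MeasureTheory ENNReal

/-- The heat semigroup `e^{tΔ_m} f` via its series representation
`e^{-t} Σ_n (t^n/n!) ∫ f dm_x^{*n}`. -/
noncomputable def heatSeries {X : Type*} [MeasurableSpace X] (m : X → Measure X)
    (f : X → ℝ) (t : ℝ) (x : X) : ℝ :=
  Real.exp (-t) * ∑' n : ℕ, (t ^ n / (n.factorial : ℝ)) * ∫ y, f y ∂(iterRW m n x)

/-- The 1-Wasserstein distance between probability measures, expressed through
Kantorovich-Rubinstein duality. -/
noncomputable def W1dual {X : Type*} [MeasurableSpace X] [MetricSpace X]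
    (μ σ : Measure X) : ℝ :=
  sSup {r : ℝ | ∃ u : X → ℝ, LipschitzWith 1 u ∧ r = (∫ z, u z ∂μ) - ∫ z, u z ∂σ}

/-!
The Markov operator `P f (x) = ∫ f dm_x` maps `C`-Lipschitz functions to `C (1 - κ)`-Lipschitz
ones: this is Kantorovich duality applied to the curvature bound `W₁(m_x, m_y) ≤ (1 - κ) d(x, y)`.
Since `∫ f dm_x^{*(n+1)} = ∫ P f dm_x^{*n}`, the function `x ↦ ∫ f dm_x^{*n}` is
`(1 - κ)^n`-Lipschitz, and summing the series of `e^{tΔ_m} f` term by term gives the Lipschitz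
constant `e^{-t} Σ_n t^n (1 - κ)^n / n! = e^{-tκ}`.
-/

open ProbabilityTheory
open scoped NNReal

/-- Valid whether or not the two series converge: their difference is summable, so they converge
or diverge together, and divergent sums are `0` by convention. -/
theorem norm_tsum_sub_tsum_le {ι E : Type*} [NormedAddCommGroup E] [CompleteSpace E]
    {a b : ι → E} {c : ι → ℝ} (hc : Summable c) (h : ∀ i, ‖a i - b i‖ ≤ c i) :
    ‖∑' i, a i - ∑' i, b i‖ ≤ ∑' i, c i := by
  have hab : Summable fun i => a i - b i := hc.of_norm_bounded h
  have hab_norm : Summable fun i => ‖a i - b i‖ := hc.of_nonneg_of_le (fun _ => norm_nonneg _) h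
  by_cases ha : Summable a
  · have hb : Summable b := by simpa using ha.sub hab
    rw [← ha.tsum_sub hb]
    exact (norm_tsum_le_tsum_norm hab_norm).trans (hab_norm.tsum_le_tsum h hc)
  · have hb : ¬Summable b := fun hb => ha (by simpa using hab.add hb)
    rw [tsum_eq_zero_of_not_summable ha, tsum_eq_zero_of_not_summable hb, sub_zero, norm_zero]
    exact tsum_nonneg fun i => (norm_nonneg _).trans (h i)

namespace MeasureTheory.Measure

variable {α β E : Type*} [MeasurableSpace α] [MeasurableSpace β] [NormedAddCommGroup E]
  {m : α → Measure β} {μ : Measure α} {f : β → E}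

theorem integrable_bind_iff (hm : Measurable m) (hf : AEStronglyMeasurable f (μ.bind m)) :
    Integrable f (μ.bind m) ↔
      (∀ᵐ x ∂μ, Integrable f (m x)) ∧ Integrable (fun x => ∫ y, ‖f y‖ ∂m x) μ :=
  MeasureTheory.Measure.integrable_comp_iff (κ := ⟨m, hm⟩) hf

theorem integral_bind [NormedSpace ℝ E] (hm : Measurable m) (hf : Integrable f (μ.bind m)) :
    ∫ y, f y ∂μ.bind m = ∫ x, ∫ y, f y ∂m x ∂μ := by
  let K : Kernel α β := ⟨m, hm⟩
  change Integrable f (K ∘ₘ μ) at hf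
  change ∫ y, f y ∂(K ∘ₘ μ) = ∫ x, ∫ y, f y ∂K x ∂μ
  rw [comp_eq_comp_const_apply] at hf ⊢
  rw [Kernel.integral_comp hf]
  simp

end MeasureTheory.Measure

section Lipschitz

variable {X : Type*} [MeasurableSpace X] [PseudoMetricSpace X] [OpensMeasurableSpace X]
  {μ : Measure X} {x₀ : X} {C : ℝ≥0} {f : X → ℝ}

theorem LipschitzWith.integrable_of_integrable_dist [IsFiniteMeasure μ]
    (hμ : Integrable (fun z => dist z x₀) μ) (hf : LipschitzWith C f) : Integrable f μ := by
  refine ((hμ.const_mul C).add (integrable_const |f x₀|)).mono'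
    hf.continuous.aestronglyMeasurable (ae_of_all _ fun z => ?_)
  have hz : |f z - f x₀| ≤ C * dist z x₀ := by simpa [Real.dist_eq] using hf.dist_le_mul z x₀
  rw [Real.norm_eq_abs, Pi.add_apply]
  linarith [abs_sub_abs_le_abs_sub (f z) (f x₀)]

theorem LipschitzWith.abs_integral_sub_le [IsProbabilityMeasure μ]
    (hμ : Integrable (fun z => dist z x₀) μ) (hf : LipschitzWith C f) :
    |∫ z, f z ∂μ - f x₀| ≤ C * ∫ z, dist z x₀ ∂μ := by
  have hfi := hf.integrable_of_integrable_dist hμ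
  calc |∫ z, f z ∂μ - f x₀| = |∫ z, (f z - f x₀) ∂μ| := by
        rw [integral_sub hfi (integrable_const _), integral_const, probReal_univ, one_smul]
    _ ≤ ∫ z, |f z - f x₀| ∂μ := abs_integral_le_integral_abs
    _ ≤ ∫ z, C * dist z x₀ ∂μ :=
        integral_mono (hfi.sub (integrable_const _)).abs (hμ.const_mul C) fun z => by
          simpa [Real.dist_eq] using hf.dist_le_mul z x₀
    _ = C * ∫ z, dist z x₀ ∂μ := integral_const_mul _ _

end Lipschitz

section W1dual

variable {X : Type*} [MeasurableSpace X] [MetricSpace X] [OpensMeasurableSpace X]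
  {μ σ : Measure X} [IsProbabilityMeasure μ] [IsProbabilityMeasure σ] {x₀ : X}

theorem integral_sub_integral_le_W1dual (hμ : Integrable (fun z => dist z x₀) μ)
    (hσ : Integrable (fun z => dist z x₀) σ) {u : X → ℝ} (hu : LipschitzWith 1 u) :
    ∫ z, u z ∂μ - ∫ z, u z ∂σ ≤ W1dual μ σ := by
  refine le_csSup ⟨∫ z, dist z x₀ ∂μ + ∫ z, dist z x₀ ∂σ, ?_⟩ ⟨u, hu, rfl⟩
  rintro r ⟨v, hv, rfl⟩
  have hvμ := hv.abs_integral_sub_le hμ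
  have hvσ := hv.abs_integral_sub_le hσ
  rw [NNReal.coe_one, one_mul] at hvμ hvσ
  linarith [le_abs_self (∫ z, v z ∂μ - v x₀), neg_abs_le (∫ z, v z ∂σ - v x₀)]

theorem W1dual_nonneg (hμ : Integrable (fun z => dist z x₀) μ)
    (hσ : Integrable (fun z => dist z x₀) σ) : 0 ≤ W1dual μ σ := by
  simpa using integral_sub_integral_le_W1dual hμ hσ (LipschitzWith.const' (0 : ℝ))

theorem integral_sub_integral_le_mul_W1dual (hμ : Integrable (fun z => dist z x₀) μ)
    (hσ : Integrable (fun z => dist z x₀) σ) {C : ℝ≥0} {u : X → ℝ} (hu : LipschitzWith C u) :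
    ∫ z, u z ∂μ - ∫ z, u z ∂σ ≤ C * W1dual μ σ := by
  rcases eq_or_ne C 0 with rfl | hC
  · have hconst : u = fun _ => u x₀ :=
      funext fun z => dist_le_zero.1 (by simpa using hu.dist_le_mul z x₀)
    rw [hconst]
    simp
  · have hCpos : (0 : ℝ) < C := by positivity
    have hu' : LipschitzWith 1 fun z => (C : ℝ)⁻¹ * u z := by
      simpa [hC, Function.comp_def] using (lipschitzWith_smul (C : ℝ)⁻¹).comp hu
    have h := integral_sub_integral_le_W1dual hμ hσ hu'
    rw [integral_const_mul, integral_const_mul, ← mul_sub, inv_mul_le_iff₀ hCpos] at h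
    exact h

end W1dual

section RandomWalk

variable {X : Type*} [MeasurableSpace X] [MetricSpace X]

/-- Ollivier-Ricci curvature at least `κ` is this condition with `K = 1 - κ`. -/
structure IsW1LipschitzWalk (m : X → Measure X) (K : ℝ≥0) : Prop where
  measurable : Measurable m
  isProbabilityMeasure : ∀ x, IsProbabilityMeasure (m x)
  integrable_dist_self : ∀ x, Integrable (fun z => dist z x) (m x)
  W1dual_le : ∀ x y, x ≠ y → W1dual (m x) (m y) ≤ K * dist x y

namespace IsW1LipschitzWalk

variable [OpensMeasurableSpace X] {m : X → Measure X} {K C : ℝ≥0} {f : X → ℝ}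

theorem integrable_dist (h : IsW1LipschitzWalk m K) (w x₀ : X) :
    Integrable (fun z => dist z x₀) (m w) :=
  have := h.isProbabilityMeasure w
  (LipschitzWith.dist_left x₀).integrable_of_integrable_dist (h.integrable_dist_self w)

theorem W1dual_nonneg (h : IsW1LipschitzWalk m K) (x y : X) : 0 ≤ W1dual (m x) (m y) :=
  have := h.isProbabilityMeasure x
  have := h.isProbabilityMeasure y
  _root_.W1dual_nonneg (h.integrable_dist x x) (h.integrable_dist y x)

theorem integral_sub_integral_le (h : IsW1LipschitzWalk m K) (hf : LipschitzWith C f)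
    (x y : X) : ∫ z, f z ∂m x - ∫ z, f z ∂m y ≤ C * K * dist x y := by
  rcases eq_or_ne x y with rfl | hxy
  · simp only [sub_self, dist_self, mul_zero, le_refl]
  have := h.isProbabilityMeasure x
  have := h.isProbabilityMeasure y
  calc ∫ z, f z ∂m x - ∫ z, f z ∂m y ≤ C * W1dual (m x) (m y) :=
        integral_sub_integral_le_mul_W1dual (h.integrable_dist x x) (h.integrable_dist y x) hf
    _ ≤ C * (K * dist x y) := mul_le_mul_of_nonneg_left (h.W1dual_le x y hxy) C.coe_nonneg
    _ = C * K * dist x y := (mul_assoc _ _ _).symm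

theorem lipschitzWith_integral (h : IsW1LipschitzWalk m K) (hf : LipschitzWith C f) :
    LipschitzWith (C * K) fun x => ∫ z, f z ∂m x :=
  LipschitzWith.of_le_add_mul _ fun x y => by
    rw [NNReal.coe_mul, ← sub_le_iff_le_add']
    exact h.integral_sub_integral_le hf x y

theorem integrable_iterRW (h : IsW1LipschitzWalk m K) (hf : LipschitzWith C f) (n : ℕ)
    (x : X) : Integrable f (iterRW m n x) := by
  induction n generalizing C f with
  | zero => exact integrable_dirac enorm_lt_top
  | succ n ih =>
    refine (Measure.integrable_bind_iff h.measurable hf.continuous.aestronglyMeasurable).2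
      ⟨ae_of_all _ fun w => ?_, ih (h.lipschitzWith_integral (lipschitzWith_one_norm.comp hf))⟩
    have := h.isProbabilityMeasure w
    exact hf.integrable_of_integrable_dist (h.integrable_dist_self w)

theorem integral_iterRW_succ (h : IsW1LipschitzWalk m K) (hf : LipschitzWith C f) (n : ℕ)
    (x : X) : ∫ z, f z ∂iterRW m (n + 1) x = ∫ w, ∫ z, f z ∂m w ∂iterRW m n x :=
  Measure.integral_bind h.measurable (h.integrable_iterRW hf (n + 1) x)

theorem lipschitzWith_integral_iterRW (h : IsW1LipschitzWalk m K) (hf : LipschitzWith C f)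
    (n : ℕ) : LipschitzWith (C * K ^ n) fun x => ∫ z, f z ∂iterRW m n x := by
  induction n generalizing C f with
  | zero => simpa [iterRW, integral_dirac] using hf
  | succ n ih =>
    simp_rw [h.integral_iterRW_succ hf n]
    rw [pow_succ', ← mul_assoc]
    exact ih (h.lipschitzWith_integral hf)

theorem abs_heatSeries_sub_le (h : IsW1LipschitzWalk m K) (hf : LipschitzWith C f) {t : ℝ}
    (ht : 0 ≤ t) (x y : X) :
    |heatSeries m f t x - heatSeries m f t y| ≤ C * Real.exp (-(t * (1 - K))) * dist x y := by
  have hterm : ∀ n : ℕ, ‖t ^ n / n.factorial * ∫ z, f z ∂iterRW m n x -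
      t ^ n / n.factorial * ∫ z, f z ∂iterRW m n y‖ ≤
        (t * K) ^ n / n.factorial * (C * dist x y) := by
    intro n
    have hn := (h.lipschitzWith_integral_iterRW hf n).dist_le_mul x y
    rw [Real.dist_eq, NNReal.coe_mul, NNReal.coe_pow] at hn
    rw [← mul_sub, Real.norm_eq_abs, abs_mul, abs_of_nonneg (by positivity)]
    calc t ^ n / n.factorial * |∫ z, f z ∂iterRW m n x - ∫ z, f z ∂iterRW m n y|
        ≤ t ^ n / n.factorial * (C * K ^ n * dist x y) := by gcongr
      _ = (t * K) ^ n / n.factorial * (C * dist x y) := by ring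
  have hsum := norm_tsum_sub_tsum_le ((Real.summable_pow_div_factorial (t * K)).mul_right _) hterm
  rw [tsum_mul_right, ← congrFun NormedSpace.exp_eq_tsum_div, ← Real.exp_eq_exp_ℝ] at hsum
  calc |heatSeries m f t x - heatSeries m f t y|
      = Real.exp (-t) * ‖∑' n : ℕ, t ^ n / n.factorial * ∫ z, f z ∂iterRW m n x -
          ∑' n : ℕ, t ^ n / n.factorial * ∫ z, f z ∂iterRW m n y‖ := by
        rw [heatSeries, heatSeries, ← mul_sub, abs_mul, abs_of_pos (Real.exp_pos _),
          Real.norm_eq_abs]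
    _ ≤ Real.exp (-t) * (Real.exp (t * K) * (C * dist x y)) := by gcongr
    _ = C * Real.exp (-(t * (1 - K))) * dist x y := by
        rw [← mul_assoc, ← Real.exp_add]
        ring_nf

end IsW1LipschitzWalk

end RandomWalk

theorem heat_semigroup_lipschitz_contraction_general {X : Type*} [MeasurableSpace X]
    [MetricSpace X] [BorelSpace X]
    (ν : Measure X) (m : X → Measure X)
    (hm : Measurable m) (hprob : ∀ x, IsProbabilityMeasure (m x))
    (hmom : ∀ x : X, Integrable (fun z => dist z x) (m x))
    (κ : ℝ) (hκ : ∀ x y : X, x ≠ y → W1dual (m x) (m y) ≤ (1 - κ) * dist x y) :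
    ∀ f : X → ℝ, LipschitzWith 1 f → MemLp f 2 ν →
      ∀ t : ℝ, 0 ≤ t → ∀ x y : X,
        |heatSeries m f t x - heatSeries m f t y| ≤ Real.exp (-(t * κ)) * dist x y := by
  intro f hf _ t ht x y
  have hwalk : IsW1LipschitzWalk m (1 - κ).toNNReal := ⟨hm, hprob, hmom, fun x y hxy =>
    (hκ x y hxy).trans (mul_le_mul_of_nonneg_right (Real.le_coe_toNNReal _) dist_nonneg)⟩
  rcases eq_or_ne x y with rfl | hxy
  · simp
  have hκ1 : 0 ≤ 1 - κ := nonneg_of_mul_nonneg_left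
    ((hwalk.W1dual_nonneg x y).trans (hκ x y hxy)) (dist_pos.2 hxy)
  simpa [Real.coe_toNNReal _ hκ1] using hwalk.abs_heatSeries_sub_le hf ht x y

/-- Lipschitz contraction of the heat semigroup under an Ollivier-Ricci curvature lower
bound: if `κ` is a lower bound for the Ollivier-Ricci curvature, i.e.
`W₁(m_x, m_y) ≤ (1-κ) d(x,y)` for all `x ≠ y`, then for every `1`-Lipschitz `f ∈ L²(X,ν)`
the heat semigroup satisfies `‖e^{tΔ_m} f‖_Lip ≤ e^{-tκ}` for all `t ≥ 0`. -/
theorem heat_semigroup_lipschitz_contraction {X : Type*} [MeasurableSpace X]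
    [MetricSpace X] [BorelSpace X]
    (ν : Measure X) [IsProbabilityMeasure ν] (m : X → Measure X)
    (hm : Measurable m) (hprob : ∀ x, IsProbabilityMeasure (m x))
    (hmom : ∀ x : X, Integrable (fun z => dist z x) (m x))
    (hinv : ν.bind m = ν) (hrev : Reversible ν m)
    (κ : ℝ) (hκ : ∀ x y : X, x ≠ y → W1dual (m x) (m y) ≤ (1 - κ) * dist x y) :
    ∀ f : X → ℝ, LipschitzWith 1 f → MemLp f 2 ν →
      ∀ t : ℝ, 0 ≤ t → ∀ x y : X,
        |heatSeries m f t x - heatSeries m f t y| ≤ Real.exp (-(t * κ)) * dist x y :=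
  heat_semigroup_lipschitz_contraction_general ν m hm hprob hmom κ hκ
end
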